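/- Let ℓ ∈ ℤ and consider indices in Fin 6 × Bool (crossings 1,…,6 at levels 0,1, written i^0, i^1). Suppose L : (Fin 6 × Bool) → (Fin 6 × Bool) → ℤ is symmetric, and the only nonzero values are L(1^1, 6^1) = L(2^0, 5^0) = L(1^0, 4^0) = L(2^1, 3^1) = L(3^0, 6^0) = L(4^1, 5^1) = ℓ (and symmetrically). If H : Set (Fin 6) → ℤ satisfies the crossing-change formula 2(H(∅) − H(S)) = Σ_{x < y, exactly one of x.1, y.1 ∈ S} (−1)^{ε(x)+ε(y)} L(x,y) for all S, and H({0}) = 0 (crossing change at the first crossing unknots), then H(∅) = ℓ. -/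

import Mathlib

open Finset

/-- Lexicographic order on `Fin 6 × Bool` with `false < true`. -/
def lexLt (x y : Fin 6 × Bool) : Prop :=
  x.1 < y.1 ∨ (x.1 = y.1 ∧ x.2 = false ∧ y.2 = true)

instance (x y : Fin 6 × Bool) : Decidable (lexLt x y) := by
  unfold lexLt; infer_instance

/-- `ε(i,b) = if b then 1 else 0`. -/
def eps (x : Fin 6 × Bool) : ℕ := if x.2 then 1 else 0

/-- The double point sets `L_i^ε` that form the six Hopf links of the Borromean generator. -/
def IsHopfPair (x y : Fin 6 × Bool) : Prop :=
  ({x, y} : Finset (Fin 6 × Bool)) = {(0, true), (5, true)} ∨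
  ({x, y} : Finset (Fin 6 × Bool)) = {(1, false), (4, false)} ∨
  ({x, y} : Finset (Fin 6 × Bool)) = {(0, false), (3, false)} ∨
  ({x, y} : Finset (Fin 6 × Bool)) = {(1, true), (2, true)} ∨
  ({x, y} : Finset (Fin 6 × Bool)) = {(2, false), (5, false)} ∨
  ({x, y} : Finset (Fin 6 × Bool)) = {(3, true), (4, true)}

instance (x y : Fin 6 × Bool) : Decidable (IsHopfPair x y) := by
  unfold IsHopfPair; infer_instance

/-- Only the two Hopf links through the first crossing, `L_1^0 ⊔ L_4^0` and `L_1^1 ⊔ L_6^1`,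
are separated by changing that crossing. -/
theorem IsHopfPair.eq_of_xor_mem_zero {x y : Fin 6 × Bool} (hlt : lexLt x y)
    (hxor : Xor (x.1 ∈ ({0} : Finset (Fin 6))) (y.1 ∈ ({0} : Finset (Fin 6))))
    (hpair : IsHopfPair x y) :
    (x, y) = ((0, false), (3, false)) ∨ (x, y) = ((0, true), (5, true)) := by
  revert x y
  decide

theorem stmt8_general (ℓ : ℤ) (L : (Fin 6 × Bool) → (Fin 6 × Bool) → ℤ)
    (h16 : L (0, true) (5, true) = ℓ)
    (h14 : L (0, false) (3, false) = ℓ)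
    (hzero : ∀ x y : Fin 6 × Bool, L x y ≠ 0 →
      ({x, y} : Finset (Fin 6 × Bool)) = {(0, true), (5, true)} ∨
      ({x, y} : Finset (Fin 6 × Bool)) = {(1, false), (4, false)} ∨
      ({x, y} : Finset (Fin 6 × Bool)) = {(0, false), (3, false)} ∨
      ({x, y} : Finset (Fin 6 × Bool)) = {(1, true), (2, true)} ∨
      ({x, y} : Finset (Fin 6 × Bool)) = {(2, false), (5, false)} ∨
      ({x, y} : Finset (Fin 6 × Bool)) = {(3, true), (4, true)})
    (H : Finset (Fin 6) → ℤ)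
    (hH : ∀ S : Finset (Fin 6),
      2 * (H ∅ - H S) = ∑ p ∈ Finset.univ.filter
        (fun p : (Fin 6 × Bool) × (Fin 6 × Bool) =>
          lexLt p.1 p.2 ∧ Xor (p.1.1 ∈ S) (p.2.1 ∈ S)),
        (-1 : ℤ) ^ (eps p.1 + eps p.2) * L p.1 p.2)
    (hunknot : H {0} = 0) :
    H ∅ = ℓ := by
  have hchange := hH {0}
  rw [hunknot, sub_zero, Finset.sum_eq_add ((0, false), (3, false)) ((0, true), (5, true))
    (by decide)] at hchange
  · norm_num [eps, h14, h16] at hchange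
    linarith
  · rintro ⟨x, y⟩ hp ⟨hne₁, hne₂⟩
    rw [Finset.mem_filter] at hp
    by_contra hL
    rcases IsHopfPair.eq_of_xor_mem_zero hp.2.1 hp.2.2 (hzero x y (right_ne_zero_of_mul hL))
      with h | h <;> contradiction
  · exact fun h => absurd (by decide) h
  · exact fun h => absurd (by decide) h

/-- The crossings `1,…,6` of the paper are indexed here by `0,…,5 : Fin 6`,
and the level `ε ∈ {0,1}` by `false, true`. -/
theorem stmt8 (ℓ : ℤ) (L : (Fin 6 × Bool) → (Fin 6 × Bool) → ℤ)
    (hsymm : ∀ x y, L x y = L y x)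
    (h16 : L (0, true) (5, true) = ℓ)
    (h25 : L (1, false) (4, false) = ℓ)
    (h14 : L (0, false) (3, false) = ℓ)
    (h23 : L (1, true) (2, true) = ℓ)
    (h36 : L (2, false) (5, false) = ℓ)
    (h45 : L (3, true) (4, true) = ℓ)
    (hzero : ∀ x y : Fin 6 × Bool, L x y ≠ 0 →
      ({x, y} : Finset (Fin 6 × Bool)) = {(0, true), (5, true)} ∨
      ({x, y} : Finset (Fin 6 × Bool)) = {(1, false), (4, false)} ∨
      ({x, y} : Finset (Fin 6 × Bool)) = {(0, false), (3, false)} ∨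
      ({x, y} : Finset (Fin 6 × Bool)) = {(1, true), (2, true)} ∨
      ({x, y} : Finset (Fin 6 × Bool)) = {(2, false), (5, false)} ∨
      ({x, y} : Finset (Fin 6 × Bool)) = {(3, true), (4, true)})
    (H : Finset (Fin 6) → ℤ)
    (hH : ∀ S : Finset (Fin 6),
      2 * (H ∅ - H S) = ∑ p ∈ Finset.univ.filter
        (fun p : (Fin 6 × Bool) × (Fin 6 × Bool) =>
          lexLt p.1 p.2 ∧ Xor (p.1.1 ∈ S) (p.2.1 ∈ S)),
        (-1 : ℤ) ^ (eps p.1 + eps p.2) * L p.1 p.2)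
    (hunknot : H {0} = 0) :
    H ∅ = ℓ :=
  stmt8_general ℓ L h16 h14 hzero H hH hunknot
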